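/- arXiv:2605.18864 — 7 statements merged into one kernel-verified Lean document; each statement's English description precedes it below -/
import Mathlib

section
/- Let q : Y → ℝ satisfy q(y) > 0 for all y, and let π*(y) = q(y)·π_ref(y)·exp(r(y)/β)/Z_q with Z_q = ∑_{y'} q(y')·π_ref(y')·exp(r(y')/β). Then π* is a pmf on Y, and for every pmf π on Y the shaped-anchor objective J'(π) = ∑_y π(y)·r(y) − β·D̃(π‖q·π_ref) satisfies J'(π) ≤ J'(π*), with equality if and only if π = π*. In particular, replacing the KL divergence by the pseudo-KL divergence with the (possibly unnormalized) anchor q·π_ref yields the stationary solution π*(y) ∝ q(y)·π_ref(y)·exp(r(y)/β). -/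
open Finset Real

lemma gibbs_aux {Y : Type*} [Fintype Y]
    (f p : Y → ℝ) (hf : ∀ y, 0 < f y) (hf1 : ∑ y, f y = 1)
    (hp : ∀ y, 0 ≤ p y) (hp1 : ∑ y, p y = 1) :
    (∑ y, p y * Real.log (f y / p y)) ≤ 0 ∧
      ((∑ y, p y * Real.log (f y / p y)) = 0 ↔ p = f) := by
  have hle : ∀ y : Y, p y * Real.log (f y / p y) ≤ f y - p y := by
    intro y
    rcases eq_or_lt_of_le (hp y) with h0 | h0
    · simp [← h0]; exact (hf y).le
    · have hx : 0 < f y / p y := div_pos (hf y) h0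
      have := Real.log_le_sub_one_of_pos hx
      calc p y * Real.log (f y / p y) ≤ p y * (f y / p y - 1) := by
            exact mul_le_mul_of_nonneg_left this h0.le
        _ = f y - p y := by field_simp
  have hsum0 : ∑ y, (f y - p y) = 0 := by
    rw [Finset.sum_sub_distrib, hf1, hp1]; ring
  have hS : (∑ y, p y * Real.log (f y / p y)) ≤ 0 := by
    calc (∑ y, p y * Real.log (f y / p y)) ≤ ∑ y, (f y - p y) :=
          Finset.sum_le_sum (fun y _ => hle y)
      _ = 0 := hsum0
  refine ⟨hS, ?_, ?_⟩
  · intro hS0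
    by_contra hne
    obtain ⟨y0, hy0⟩ := Function.ne_iff.mp hne
    have hlt : p y0 * Real.log (f y0 / p y0) < f y0 - p y0 := by
      rcases eq_or_lt_of_le (hp y0) with h0 | h0
      · rw [← h0]
        simpa using hf y0
      · have hx : 0 < f y0 / p y0 := div_pos (hf y0) h0
        have hne1 : f y0 / p y0 ≠ 1 := by
          intro h
          apply hy0
          field_simp at h
          linarith
        have hlog := Real.log_lt_sub_one_of_pos hx hne1
        have h2 : p y0 * Real.log (f y0 / p y0) < p y0 * (f y0 / p y0 - 1) :=
          mul_lt_mul_of_pos_left hlog h0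
        have h3 : p y0 * (f y0 / p y0 - 1) = f y0 - p y0 := by field_simp
        linarith
    have hlt2 : (∑ y, p y * Real.log (f y / p y)) < ∑ y, (f y - p y) :=
      Finset.sum_lt_sum (fun y _ => hle y) ⟨y0, Finset.mem_univ _, hlt⟩
    rw [hsum0] at hlt2
    linarith
  · intro h
    rw [h]
    apply Finset.sum_eq_zero
    intro y _
    rw [div_self (hf y).ne', Real.log_one, mul_zero]

theorem sage_shaped_anchor_stationary
    {Y : Type*} [Fintype Y] [Nonempty Y]
    (πref : Y → ℝ) (href_pos : ∀ y, 0 < πref y) (href_sum : ∑ y, πref y = 1)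
    (r : Y → ℝ) (β : ℝ) (hβ : 0 < β)
    (q : Y → ℝ) (hq : ∀ y, 0 < q y)
    (Zq : ℝ) (hZq : Zq = ∑ y', q y' * πref y' * Real.exp (r y' / β))
    (πstar : Y → ℝ) (hπstar : ∀ y, πstar y = q y * πref y * Real.exp (r y / β) / Zq)
    (J' : (Y → ℝ) → ℝ)
    (hJ' : ∀ p : Y → ℝ,
      J' p = (∑ y, p y * r y) - β * ∑ y, p y * Real.log (p y / (q y * πref y))) :
    ((∀ y, 0 ≤ πstar y) ∧ ∑ y, πstar y = 1) ∧
    (∀ p : Y → ℝ, (∀ y, 0 ≤ p y) → (∑ y, p y = 1) →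
      J' p ≤ J' πstar ∧ (J' p = J' πstar ↔ p = πstar)) := by
  have hZpos : 0 < Zq := by
    rw [hZq]
    refine Finset.sum_pos (fun y _ => ?_) Finset.univ_nonempty
    have := hq y; have := href_pos y; positivity
  have hπs_pos : ∀ y, 0 < πstar y := fun y => by
    rw [hπstar y]
    have := hq y; have := href_pos y; positivity
  have hπs_sum : ∑ y, πstar y = 1 := by
    simp only [hπstar]
    rw [← Finset.sum_div, ← hZq, div_self hZpos.ne']
  -- key: J' p = β * (∑ p log(πstar/p)) + β * log Zq for pmf p
  have key : ∀ p : Y → ℝ, (∀ y, 0 ≤ p y) → (∑ y, p y = 1) →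
      J' p = β * (∑ y, p y * Real.log (πstar y / p y)) + β * Real.log Zq := by
    intro p hp hp1
    rw [hJ']
    have hterm : ∀ y, p y * Real.log (p y / (q y * πref y)) =
        -(p y * Real.log (πstar y / p y)) + p y * (r y / β) - p y * Real.log Zq := by
      intro y
      rcases eq_or_lt_of_le (hp y) with h0 | h0
      · rw [← h0]; ring
      · have hqπ : 0 < q y * πref y := mul_pos (hq y) (href_pos y)
        have hlog : Real.log (πstar y) =
            Real.log (q y * πref y) + r y / β - Real.log Zq := by
          rw [hπstar y, Real.log_div (by positivity) hZpos.ne',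
            Real.log_mul (by positivity) (Real.exp_pos _).ne', Real.log_exp]
        rw [Real.log_div h0.ne' hqπ.ne', Real.log_div (hπs_pos y).ne' h0.ne', hlog]
        ring
    simp only [hterm]
    rw [Finset.sum_sub_distrib, Finset.sum_add_distrib]
    rw [Finset.sum_neg_distrib]
    have h1 : ∑ y, p y * (r y / β) = (∑ y, p y * r y) / β := by
      rw [Finset.sum_div]; congr 1; ext y; ring
    have h2 : ∑ y, p y * Real.log Zq = Real.log Zq := by
      rw [← Finset.sum_mul, hp1, one_mul]
    rw [h1, h2]
    field_simp
    ring
  refine ⟨⟨fun y => (hπs_pos y).le, hπs_sum⟩, fun p hp hp1 => ?_⟩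
  obtain ⟨hS, hS0⟩ := gibbs_aux πstar p hπs_pos hπs_sum hp hp1
  have hJp := key p hp hp1
  have hJs := key πstar (fun y => (hπs_pos y).le) hπs_sum
  have hSs : (∑ y, πstar y * Real.log (πstar y / πstar y)) = 0 := by
    apply Finset.sum_eq_zero
    intro y _
    rw [div_self (hπs_pos y).ne', Real.log_one, mul_zero]
  rw [hSs, mul_zero, zero_add] at hJs
  constructor
  · rw [hJp, hJs]; nlinarith
  · rw [hJp, hJs]
    constructor
    · intro h
      have : (∑ y, p y * Real.log (πstar y / p y)) = 0 := by
        nlinarith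
      exact hS0.mp this
    · intro h
      rw [hS0.mpr h]
      ring
end

section
/- Let α > 0 and define the entropy-regularized objective L(π) = ∑_y π(y)·r(y) + α·H(π) − β·D(π‖π_ref) for pmfs π on Y, where H(π) = −∑_y π(y)·log π(y). Let π_ent(y) = π_ref(y)^{β/(α+β)}·exp(r(y)/(α+β))/Z_ent with Z_ent = ∑_{y'} π_ref(y')^{β/(α+β)}·exp(r(y')/(α+β)). Then π_ent is a pmf, and for every pmf π, L(π) ≤ L(π_ent), with equality if and only if π = π_ent. -/
open Finset Real

theorem entropy_regularized_stationary
    {Y : Type*} [Fintype Y] [Nonempty Y]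
    (πref : Y → ℝ) (href_pos : ∀ y, 0 < πref y) (href_sum : ∑ y, πref y = 1)
    (r : Y → ℝ) (β : ℝ) (hβ : 0 < β) (α : ℝ) (hα : 0 < α)
    (Zent : ℝ)
    (hZent : Zent = ∑ y', πref y' ^ (β / (α + β)) * Real.exp (r y' / (α + β)))
    (πent : Y → ℝ)
    (hπent : ∀ y, πent y = πref y ^ (β / (α + β)) * Real.exp (r y / (α + β)) / Zent)
    (L : (Y → ℝ) → ℝ)
    (hL : ∀ p : Y → ℝ,
      L p = (∑ y, p y * r y) + α * (-∑ y, p y * Real.log (p y))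
            - β * ∑ y, p y * Real.log (p y / πref y)) :
    ((∀ y, 0 ≤ πent y) ∧ ∑ y, πent y = 1) ∧
    (∀ p : Y → ℝ, (∀ y, 0 ≤ p y) → (∑ y, p y = 1) →
      L p ≤ L πent ∧ (L p = L πent ↔ p = πent)) := by
  have hγ : (0:ℝ) < α + β := by linarith
  have hZ : 0 < Zent := by
    rw [hZent]
    apply Finset.sum_pos
    · intro y _
      have := href_pos y
      positivity
    · exact Finset.univ_nonempty
  have hπent_pos : ∀ y, 0 < πent y := by
    intro y
    rw [hπent]
    have := href_pos y
    positivity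
  have hπent_sum : ∑ y, πent y = 1 := by
    simp only [hπent]
    rw [← Finset.sum_div, ← hZent, div_self (ne_of_gt hZ)]
  -- termwise Gibbs bound
  have key : ∀ (p : Y → ℝ), (∀ y, 0 ≤ p y) → ∀ y,
      p y * Real.log (πent y / p y) ≤ πent y - p y ∧
      (p y * Real.log (πent y / p y) = πent y - p y ↔ p y = πent y) := by
    intro p hp y
    rcases eq_or_lt_of_le (hp y) with h | h
    · constructor
      · rw [← h]; simpa using (hπent_pos y).le
      · rw [← h]
        constructor
        · intro he
          have := hπent_pos y
          simp at he
          linarith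
        · intro he
          have := hπent_pos y
          linarith
    · have hx : 0 < πent y / p y := div_pos (hπent_pos y) h
      have hid : p y * (πent y / p y - 1) = πent y - p y := by
        field_simp
      constructor
      · have hle : Real.log (πent y / p y) ≤ πent y / p y - 1 :=
          Real.log_le_sub_one_of_pos hx
        calc p y * Real.log (πent y / p y) ≤ p y * (πent y / p y - 1) :=
              mul_le_mul_of_nonneg_left hle h.le
          _ = πent y - p y := hid
      · constructor
        · intro he
          by_contra hne
          have hx1 : πent y / p y ≠ 1 := by
            intro h1
            apply hne
            field_simp at h1
            linarith
          have hlt : Real.log (πent y / p y) < πent y / p y - 1 :=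
            Real.log_lt_sub_one_of_pos hx hx1
          have : p y * Real.log (πent y / p y) < πent y - p y := by
            calc p y * Real.log (πent y / p y) < p y * (πent y / p y - 1) :=
                  (mul_lt_mul_iff_right₀ h).mpr hlt
              _ = πent y - p y := hid
          linarith
        · intro he
          rw [he, div_self (hπent_pos y).ne', Real.log_one, mul_zero]
          ring
  -- Gibbs inequality and equality case
  have gibbs : ∀ (p : Y → ℝ), (∀ y, 0 ≤ p y) → ∑ y, p y = 1 →
      (∑ y, p y * Real.log (πent y / p y)) ≤ 0 ∧
      ((∑ y, p y * Real.log (πent y / p y)) = 0 ↔ p = πent) := by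
    intro p hp hps
    have hsum0 : ∑ y, (πent y - p y) = 0 := by
      rw [Finset.sum_sub_distrib, hπent_sum, hps, sub_self]
    have hle : (∑ y, p y * Real.log (πent y / p y)) ≤ ∑ y, (πent y - p y) :=
      Finset.sum_le_sum (fun y _ => (key p hp y).1)
    constructor
    · linarith [hle, hsum0]
    · constructor
      · intro he
        have heq : (∑ y, p y * Real.log (πent y / p y)) = ∑ y, (πent y - p y) := by
          rw [he, hsum0]
        have := (Finset.sum_eq_sum_iff_of_le (fun y _ => (key p hp y).1)).mp heq
        funext y
        exact (key p hp y).2.mp (this y (Finset.mem_univ y))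
      · intro he
        subst he
        apply Finset.sum_eq_zero
        intro y _
        rw [div_self (hπent_pos y).ne', Real.log_one, mul_zero]
  -- formula for L
  have hLform : ∀ (p : Y → ℝ), (∀ y, 0 ≤ p y) → ∑ y, p y = 1 →
      L p = (α + β) * (Real.log Zent + ∑ y, p y * Real.log (πent y / p y)) := by
    intro p hp hps
    have term : ∀ y, p y * r y - α * (p y * Real.log (p y))
        - β * (p y * Real.log (p y / πref y))
        = (α + β) * (p y * Real.log Zent + p y * Real.log (πent y / p y)) := by
      intro y
      rcases eq_or_lt_of_le (hp y) with h | h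
      · simp [← h]
      · have hlogπent : Real.log (πent y)
            = (β / (α + β)) * Real.log (πref y) + r y / (α + β) - Real.log Zent := by
          rw [hπent, Real.log_div _ hZ.ne', Real.log_mul _ (Real.exp_ne_zero _),
            Real.log_rpow (href_pos y), Real.log_exp]
          · have := href_pos y
            positivity
          · have := href_pos y
            positivity
        rw [Real.log_div (hπent_pos y).ne' h.ne', Real.log_div h.ne' (href_pos y).ne',
          hlogπent]
        field_simp
        ring
    calc L p = ∑ y, (p y * r y - α * (p y * Real.log (p y))
          - β * (p y * Real.log (p y / πref y))) := by
          rw [hL, Finset.sum_sub_distrib, Finset.sum_sub_distrib,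
            ← Finset.mul_sum, ← Finset.mul_sum]
          ring
      _ = ∑ y, (α + β) * (p y * Real.log Zent + p y * Real.log (πent y / p y)) :=
          Finset.sum_congr rfl (fun y _ => term y)
      _ = (α + β) * (Real.log Zent + ∑ y, p y * Real.log (πent y / p y)) := by
          rw [← Finset.mul_sum, Finset.sum_add_distrib, ← Finset.sum_mul, hps, one_mul]
  have hSent : (∑ y, πent y * Real.log (πent y / πent y)) = 0 :=
    (gibbs πent (fun y => (hπent_pos y).le) hπent_sum).2.mpr rfl
  have hLent : L πent = (α + β) * Real.log Zent := by
    rw [hLform πent (fun y => (hπent_pos y).le) hπent_sum, hSent, add_zero]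
  refine ⟨⟨fun y => (hπent_pos y).le, hπent_sum⟩, ?_⟩
  intro p hp hps
  obtain ⟨hSle, hSeq⟩ := gibbs p hp hps
  rw [hLform p hp hps, hLent]
  constructor
  · nlinarith [Real.log_le_sub_one_of_pos hZ]
  · constructor
    · intro he
      apply hSeq.mp
      have : Real.log Zent + ∑ y, p y * Real.log (πent y / p y) = Real.log Zent := by
        have := mul_left_cancel₀ hγ.ne' he
        linarith [this]
      linarith
    · intro he
      rw [hSeq.mpr he, add_zero]
end

section
/- Let π_RLVR be the RLVR policy. Then for all y₁, y₂ ∈ Y with r(y₁) = r(y₂), one has π_RLVR(y₁)/π_RLVR(y₂) = π_ref(y₁)/π_ref(y₂). In particular, reverse-KL RLVR preserves the reference model's relative probabilities among reward-valid trajectories, so low-density valid trajectories remain relatively suppressed. -/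
open Finset Real

theorem rlvr_preserves_relative_probabilities
    {Y : Type*} [Fintype Y] [Nonempty Y]
    (πref : Y → ℝ) (href_pos : ∀ y, 0 < πref y) (href_sum : ∑ y, πref y = 1)
    (r : Y → ℝ) (β : ℝ) (hβ : 0 < β)
    (Z : ℝ) (hZ : Z = ∑ y', πref y' * Real.exp (r y' / β))
    (πRLVR : Y → ℝ) (hπ : ∀ y, πRLVR y = πref y * Real.exp (r y / β) / Z)
    (y₁ y₂ : Y) (hr : r y₁ = r y₂) :
    πRLVR y₁ / πRLVR y₂ = πref y₁ / πref y₂ := by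
  have hZpos : 0 < Z := by
    rw [hZ]
    exact Finset.sum_pos (fun y _ => mul_pos (href_pos y) (Real.exp_pos _))
      Finset.univ_nonempty
  rw [hπ, hπ, hr]
  field_simp
end

section
/- Assume 0 ≤ r(y) ≤ 1 for all y ∈ Y. Then the normalizer Z = ∑_y π_ref(y)·exp(r(y)/β) satisfies Z ≥ 1, and consequently π_RLVR(y) ≤ exp(1/β)·π_ref(y) for every y ∈ Y. That is, the multiplicative update of reverse-KL RLVR can amplify the probability of any trajectory by at most the factor exp(1/β) relative to its initial density under the reference model (low-density suppression). -/
open Finset Real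

theorem rlvr_low_density_suppression
    {Y : Type*} [Fintype Y] [Nonempty Y]
    (πref : Y → ℝ) (href_pos : ∀ y, 0 < πref y) (href_sum : ∑ y, πref y = 1)
    (r : Y → ℝ) (β : ℝ) (hβ : 0 < β)
    (hr : ∀ y, 0 ≤ r y ∧ r y ≤ 1)
    (Z : ℝ) (hZ : Z = ∑ y', πref y' * Real.exp (r y' / β))
    (πRLVR : Y → ℝ) (hπ : ∀ y, πRLVR y = πref y * Real.exp (r y / β) / Z) :
    1 ≤ Z ∧ ∀ y, πRLVR y ≤ Real.exp (1 / β) * πref y := by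
  have hZ1 : 1 ≤ Z := by
    rw [hZ, ← href_sum]
    apply Finset.sum_le_sum
    intro y _
    have h1 : 1 ≤ Real.exp (r y / β) := by
      rw [← Real.exp_zero]
      exact Real.exp_le_exp.mpr (div_nonneg (hr y).1 hβ.le)
    nlinarith [href_pos y]
  refine ⟨hZ1, fun y => ?_⟩
  rw [hπ y]
  have hle : Real.exp (r y / β) ≤ Real.exp (1 / β) :=
    Real.exp_le_exp.mpr (by gcongr; exact (hr y).2)
  have hp := (href_pos y).le
  calc πref y * Real.exp (r y / β) / Z ≤ πref y * Real.exp (r y / β) := by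
        exact div_le_self (by positivity) hZ1
    _ ≤ Real.exp (1 / β) * πref y := by nlinarith [Real.exp_pos (r y / β)]
end

section
/- Assume r(y) ∈ {0, 1} for all y ∈ Y, let C = {y ∈ Y : r(y) = 1} be the set of reward-valid trajectories, and for ε > 0 and a pmf p define the empirical support supp_ε(p) = {y ∈ C : p(y) > ε}. Then for every ε > 0, supp_ε(π_RLVR) ⊆ supp_{ε·exp(−1/β)}(π_ref); i.e., every reward-valid trajectory with π_RLVR-probability exceeding ε already has π_ref-probability exceeding ε·exp(−1/β). -/
open Finset Real

theorem rlvr_empirical_support_preservation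
    {Y : Type*} [Fintype Y] [Nonempty Y]
    (πref : Y → ℝ) (href_pos : ∀ y, 0 < πref y) (href_sum : ∑ y, πref y = 1)
    (r : Y → ℝ) (β : ℝ) (hβ : 0 < β)
    (hr : ∀ y, r y = 0 ∨ r y = 1)
    (Z : ℝ) (hZ : Z = ∑ y', πref y' * Real.exp (r y' / β))
    (πRLVR : Y → ℝ) (hπ : ∀ y, πRLVR y = πref y * Real.exp (r y / β) / Z)
    (ε : ℝ) (hε : 0 < ε) :
    {y : Y | r y = 1 ∧ ε < πRLVR y} ⊆
      {y : Y | r y = 1 ∧ ε * Real.exp (-(1 / β)) < πref y} := by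
  intro y hy
  obtain ⟨hry, hlt⟩ := hy
  refine ⟨hry, ?_⟩
  have hZ1 : (1:ℝ) ≤ Z := by
    rw [hZ, ← href_sum]
    apply Finset.sum_le_sum
    intro i _
    have h0 : 0 ≤ r i := (hr i).elim (fun h => h.ge) (fun h => by rw [h]; norm_num)
    nlinarith [Real.one_le_exp (by positivity : (0:ℝ) ≤ r i / β), href_pos i]
  have hZ0 : 0 < Z := lt_of_lt_of_le one_pos hZ1
  rw [hπ y, hry] at hlt
  have h2 : πref y * Real.exp (1 / β) / Z ≤ πref y * Real.exp (1 / β) :=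
    div_le_self (by have := href_pos y; positivity) hZ1
  have h3 : ε < πref y * Real.exp (1 / β) := lt_of_lt_of_le hlt h2
  rw [Real.exp_neg]
  have hp := Real.exp_pos (1/β)
  calc ε * (Real.exp (1/β))⁻¹ < πref y * Real.exp (1/β) * (Real.exp (1/β))⁻¹ := by
        apply mul_lt_mul_of_pos_right h3 (by positivity)
    _ = πref y := by field_simp
end

section
/- Let λ ∈ ℝ satisfy λ > r(y) for all y ∈ Y, assume ∑_y β·π_ref(y)/(λ − r(y)) = 1, and define the forward-KL policy π_FKL(y) = β·π_ref(y)/(λ − r(y)). Let q : Y → ℝ satisfy q(y) > 0 for all y and define the reweighting factor w(y) = ((λ − r(y))/β)·exp(r(y)/β)·q(y). Then w(y) > 0 for all y and the SAGE policy is the w-reweighting of the forward-KL policy: π_SAGE(y) = π_FKL(y)·w(y) / ∑_{y'} π_FKL(y')·w(y') for every y ∈ Y. In particular, the reference policy π_ref cancels and the relative behavior of π_SAGE and π_FKL is fully determined by r and q. -/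
open Finset Real

theorem sage_is_w_reweighting_of_fkl
    {Y : Type*} [Fintype Y] [Nonempty Y]
    (πref : Y → ℝ) (href_pos : ∀ y, 0 < πref y) (href_sum : ∑ y, πref y = 1)
    (r : Y → ℝ) (β : ℝ) (hβ : 0 < β)
    (lam : ℝ) (hlam : ∀ y, r y < lam)
    (hnorm : ∑ y, β * πref y / (lam - r y) = 1)
    (πFKL : Y → ℝ) (hπFKL : ∀ y, πFKL y = β * πref y / (lam - r y))
    (q : Y → ℝ) (hq : ∀ y, 0 < q y)
    (Zq : ℝ) (hZq : Zq = ∑ y', q y' * πref y' * Real.exp (r y' / β))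
    (πSAGE : Y → ℝ)
    (hπSAGE : ∀ y, πSAGE y = q y * πref y * Real.exp (r y / β) / Zq)
    (w : Y → ℝ) (hw : ∀ y, w y = ((lam - r y) / β) * Real.exp (r y / β) * q y) :
    (∀ y, 0 < w y) ∧
    ∀ y, πSAGE y = πFKL y * w y / (∑ y', πFKL y' * w y') := by
  have key : ∀ y, πFKL y * w y = q y * πref y * Real.exp (r y / β) := by
    intro y
    have hly : lam - r y ≠ 0 := by have := hlam y; linarith
    rw [hπFKL, hw]
    field_simp
  constructor
  · intro y
    rw [hw]
    have hly : 0 < lam - r y := by have := hlam y; linarith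
    exact mul_pos (mul_pos (div_pos hly hβ) (Real.exp_pos _)) (hq y)
  · intro y
    have hsum : (∑ y', πFKL y' * w y') = Zq := by
      rw [hZq]; exact Finset.sum_congr rfl (fun y' _ => key y')
    rw [hπSAGE, key, hsum]
end

section
/- Let C ⊆ Y, let r be the binary reward r(y) = 1 if y ∈ C and r(y) = 0 otherwise, let λ > 1 satisfy ∑_y β·π_ref(y)/(λ − r(y)) = 1, and define the forward-KL policy π_FKL(y) = β·π_ref(y)/(λ − r(y)). Let q : Y → ℝ satisfy q(y) > 0 for all y and suppose q(y₁) > (λ / ((λ − 1)·exp(1/β)))·q(y₂) for every y₁ ∈ C and every y₂ ∉ C. If C is nonempty and C ≠ Y, then the SAGE policy allocates strictly less probability mass to reward-invalid trajectories than the forward-KL policy: ∑_{y∉C} π_SAGE(y) < ∑_{y∉C} π_FKL(y). -/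
open Finset Real

theorem sage_less_off_target_mass_than_fkl
    {Y : Type*} [Fintype Y] [Nonempty Y] [DecidableEq Y]
    (πref : Y → ℝ) (href_pos : ∀ y, 0 < πref y) (href_sum : ∑ y, πref y = 1)
    (β : ℝ) (hβ : 0 < β)
    (C : Finset Y) (r : Y → ℝ)
    (hr : ∀ y, r y = if y ∈ C then 1 else 0)
    (lam : ℝ) (hlam : 1 < lam)
    (hnorm : ∑ y, β * πref y / (lam - r y) = 1)
    (πFKL : Y → ℝ) (hπFKL : ∀ y, πFKL y = β * πref y / (lam - r y))
    (q : Y → ℝ) (hq : ∀ y, 0 < q y)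
    (hguide : ∀ y₁ ∈ C, ∀ y₂ ∈ Cᶜ,
      (lam / ((lam - 1) * Real.exp (1 / β))) * q y₂ < q y₁)
    (Zq : ℝ) (hZq : Zq = ∑ y', q y' * πref y' * Real.exp (r y' / β))
    (πSAGE : Y → ℝ)
    (hπSAGE : ∀ y, πSAGE y = q y * πref y * Real.exp (r y / β) / Zq)
    (hC_nonempty : C.Nonempty) (hC_ne : C ≠ Finset.univ) :
    ∑ y ∈ Cᶜ, πSAGE y < ∑ y ∈ Cᶜ, πFKL y := by
  set E := Real.exp (1 / β) with hE
  have hEpos : 0 < E := Real.exp_pos _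
  set K := lam / ((lam - 1) * E) with hK
  set A := ∑ y ∈ C, πref y with hA
  set B := ∑ y ∈ Cᶜ, πref y with hBdef
  set S₁ := ∑ y ∈ C, q y * πref y with hS1def
  set S₂ := ∑ y ∈ Cᶜ, q y * πref y with hS2def
  clear_value E K A B S₁ S₂
  have hCc : Cᶜ.Nonempty := by
    rw [Finset.nonempty_iff_ne_empty]
    intro h
    exact hC_ne ((Finset.compl_eq_empty_iff C).mp h)
  have hApos : 0 < A := by rw [hA]; exact Finset.sum_pos (fun y _ => href_pos y) hC_nonempty
  have hBpos : 0 < B := by rw [hBdef]; exact Finset.sum_pos (fun y _ => href_pos y) hCc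
  have hS1pos : 0 < S₁ := by rw [hS1def]; exact Finset.sum_pos (fun y _ => mul_pos (hq y) (href_pos y)) hC_nonempty
  have hS2pos : 0 < S₂ := by rw [hS2def]; exact Finset.sum_pos (fun y _ => mul_pos (hq y) (href_pos y)) hCc
  have hlam0 : (0:ℝ) < lam := lt_trans one_pos hlam
  have hlam1 : (0:ℝ) < lam - 1 := by linarith
  -- value of Zq
  have hZq' : Zq = E * S₁ + S₂ := by
    rw [hZq, ← Finset.sum_add_sum_compl C]
    congr 1
    · rw [hS1def, Finset.mul_sum]
      refine Finset.sum_congr rfl fun y hy => ?_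
      rw [hr y, if_pos hy, ← hE]
      ring
    · rw [hS2def]
      refine Finset.sum_congr rfl fun y hy => ?_
      rw [hr y, if_neg (Finset.mem_compl.mp hy)]
      simp
  have hZqpos : 0 < Zq := by
    rw [hZq']; exact add_pos (mul_pos hEpos hS1pos) hS2pos
  -- split the normalization
  have h1 : ∑ y ∈ C, β * πref y / (lam - r y) = β * A / (lam - 1) := by
    rw [hA, Finset.mul_sum, Finset.sum_div]
    exact Finset.sum_congr rfl fun y hy => by rw [hr y, if_pos hy]
  have h2 : ∑ y ∈ Cᶜ, β * πref y / (lam - r y) = β * B / lam := by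
    rw [hBdef, Finset.mul_sum, Finset.sum_div]
    refine Finset.sum_congr rfl fun y hy => ?_
    rw [hr y, if_neg (Finset.mem_compl.mp hy), sub_zero]
  have hnorm' : β * A / (lam - 1) + β * B / lam = 1 := by
    rw [← h1, ← h2, Finset.sum_add_sum_compl]; exact hnorm
  have hnorm'' : β * A * lam + β * B * (lam - 1) = (lam - 1) * lam := by
    have h := hnorm'
    field_simp at h
    linarith
  -- sums of the two policies over Cᶜ
  have hL : ∑ y ∈ Cᶜ, πSAGE y = S₂ / Zq := by
    rw [hS2def, Finset.sum_div]
    refine Finset.sum_congr rfl fun y hy => ?_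
    rw [hπSAGE y, hr y, if_neg (Finset.mem_compl.mp hy)]
    simp
  have hR : ∑ y ∈ Cᶜ, πFKL y = β * B / lam := by
    rw [← h2]
    exact Finset.sum_congr rfl fun y _ => hπFKL y
  -- key double-sum inequality
  have key : K * S₂ * A < S₁ * B := by
    have inner : ∀ y₂ ∈ Cᶜ, K * (q y₂ * πref y₂) * A < S₁ * πref y₂ := by
      intro y₂ hy₂
      have hsum : ∑ y₁ ∈ C, K * (q y₂ * πref y₂) * πref y₁
          < ∑ y₁ ∈ C, q y₁ * πref y₁ * πref y₂ := by
        apply Finset.sum_lt_sum_of_nonempty hC_nonempty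
        intro y₁ hy₁
        have hg := hguide y₁ hy₁ y₂ hy₂
        have h := mul_lt_mul_of_pos_right hg (mul_pos (href_pos y₂) (href_pos y₁))
        calc K * (q y₂ * πref y₂) * πref y₁ = K * q y₂ * (πref y₂ * πref y₁) := by ring
          _ < q y₁ * (πref y₂ * πref y₁) := h
          _ = q y₁ * πref y₁ * πref y₂ := by ring
      calc K * (q y₂ * πref y₂) * A
            = ∑ y₁ ∈ C, K * (q y₂ * πref y₂) * πref y₁ := by rw [hA, Finset.mul_sum]
        _ < ∑ y₁ ∈ C, q y₁ * πref y₁ * πref y₂ := hsum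
        _ = S₁ * πref y₂ := by rw [hS1def, Finset.sum_mul]
    calc K * S₂ * A = ∑ y₂ ∈ Cᶜ, K * (q y₂ * πref y₂) * A := by
          rw [hS2def, Finset.mul_sum, Finset.sum_mul]
      _ < ∑ y₂ ∈ Cᶜ, S₁ * πref y₂ := Finset.sum_lt_sum_of_nonempty hCc inner
      _ = S₁ * B := by rw [hBdef, Finset.mul_sum]
  have hden : 0 < (lam - 1) * E := mul_pos hlam1 hEpos
  have hKmul : ((lam - 1) * E) * K = lam := by
    rw [hK]; field_simp
  have key' : lam * (S₂ * A) < ((lam - 1) * E) * (S₁ * B) := by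
    have h := mul_lt_mul_of_pos_left key hden
    calc lam * (S₂ * A) = ((lam - 1) * E * K) * (S₂ * A) := by rw [hKmul]
      _ = ((lam - 1) * E) * (K * S₂ * A) := by ring
      _ < ((lam - 1) * E) * (S₁ * B) := h
  -- conclude
  rw [hL, hR, div_lt_div_iff₀ hZqpos hlam0, hZq']
  have hfin := mul_lt_mul_of_pos_left key' hβ
  have h3 : S₂ * (β * A * lam + β * B * (lam - 1)) = S₂ * ((lam - 1) * lam) := by
    rw [hnorm'']
  have h4 : S₂ * lam * (lam - 1) < β * B * (E * S₁ + S₂) * (lam - 1) := by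
    nlinarith [hfin, h3]
  exact lt_of_mul_lt_mul_right h4 (le_of_lt hlam1)
end
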